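/- In the reduction graph for Exact 3-Cover: let (X, 𝒞) be an instance with X = {x_1,…,x_{3q}} and 𝒞 = {C_1,…,C_m} a family of 3-element subsets of X, and let G be the split graph with clique {c_1,…,c_m} ∪ {u}, independent set {x_1,…,x_{3q}} ∪ {v, w}, edges c_i x_j iff x_j ∈ C_i, edges u c_i for all i, and edges uv, uw. Then any dominating set S of G with |S| ≤ q + 2 and |S ∩ {u,v,w}| = 2 and S ∩ X = ∅ contains at least q of the vertices c_i, and the corresponding sets {C_i : c_i ∈ S} cover X. -/
import Mathlib


def IsDominatingSet {V : Type*} (G : SimpleGraph V) (D : Set V) : Prop :=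
  ∀ v ∉ D, ∃ u ∈ D, G.Adj u v

noncomputable def domNum {V : Type*} [Fintype V] (G : SimpleGraph V) : ℕ :=
  sInf {n | ∃ D : Finset V, IsDominatingSet G ↑D ∧ D.card = n}

def IsIndepSet {V : Type*} (G : SimpleGraph V) (s : Set V) : Prop :=
  s.Pairwise fun a b => ¬ G.Adj a b
/-- The split graph constructed from an Exact 3-Cover instance (X, 𝒞). -/
def X3CGraph (q m : ℕ) (Cfam : Fin m → Finset (Fin (3 * q))) :
    SimpleGraph (Fin m ⊕ Fin (3 * q) ⊕ Fin 3) :=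
  SimpleGraph.fromRel (fun a b =>
    (∃ i j : Fin m, a = Sum.inl i ∧ b = Sum.inl j) ∨
    (∃ i : Fin m, ∃ j : Fin (3 * q), a = Sum.inl i ∧ b = Sum.inr (Sum.inl j) ∧
      j ∈ Cfam i) ∨
    (∃ i : Fin m, a = Sum.inr (Sum.inr 0) ∧ b = Sum.inl i) ∨
    (a = Sum.inr (Sum.inr 0) ∧
      (b = Sum.inr (Sum.inr 1) ∨ b = Sum.inr (Sum.inr 2))))

/-- In the X3C reduction graph, a dominating set of size ≤ q+2 meeting {u,v,w} in
two vertices and avoiding X contains at least q clique vertices cᵢ, whose sets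
cover X. -/
theorem stmt_15 (q m : ℕ) (Cfam : Fin m → Finset (Fin (3 * q)))
    (hsize : ∀ i : Fin m, (Cfam i).card = 3)
    (S : Finset (Fin m ⊕ Fin (3 * q) ⊕ Fin 3))
    (hdom : IsDominatingSet (X3CGraph q m Cfam) ↑S)
    (hcard : S.card ≤ q + 2)
    (huvw : (S ∩ ({Sum.inr (Sum.inr 0), Sum.inr (Sum.inr 1), Sum.inr (Sum.inr 2)} :
        Finset (Fin m ⊕ Fin (3 * q) ⊕ Fin 3))).card = 2)
    (hX : ∀ j : Fin (3 * q), Sum.inr (Sum.inl j) ∉ S) :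
    q ≤ (Finset.univ.filter (fun i : Fin m => Sum.inl i ∈ S)).card ∧
      ∀ j : Fin (3 * q), ∃ i : Fin m, Sum.inl i ∈ S ∧ j ∈ Cfam i := by
  have hcov : ∀ j : Fin (3 * q), ∃ i : Fin m, Sum.inl i ∈ S ∧ j ∈ Cfam i := by
    intro j
    obtain ⟨a, ha, hadj⟩ := hdom (Sum.inr (Sum.inl j)) (hX j)
    simp only [X3CGraph, SimpleGraph.fromRel_adj] at hadj
    obtain ⟨hne, h | h⟩ := hadj
    · rcases h with ⟨i, j', h1, h2⟩ | ⟨i, j', h1, h2, h3⟩ | ⟨i, h1, h2⟩ | ⟨h1, h2 | h2⟩ <;>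
        simp_all
      exact ⟨i, ha, h3⟩
    · rcases h with ⟨i, j', h1, h2⟩ | ⟨i, j', h1, h2, h3⟩ | ⟨i, h1, h2⟩ | ⟨h1, h2 | h2⟩ <;>
        simp_all
  refine ⟨?_, hcov⟩
  set T := Finset.univ.filter (fun i : Fin m => Sum.inl i ∈ S) with hT
  have hsub : (Finset.univ : Finset (Fin (3 * q))) ⊆ T.biUnion Cfam := by
    intro j _
    obtain ⟨i, hi, hji⟩ := hcov j
    exact Finset.mem_biUnion.mpr ⟨i, Finset.mem_filter.mpr ⟨Finset.mem_univ _, hi⟩, hji⟩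
  have h1 : 3 * q ≤ T.card * 3 := by
    calc 3 * q = (Finset.univ : Finset (Fin (3 * q))).card := by simp
    _ ≤ (T.biUnion Cfam).card := Finset.card_le_card hsub
    _ ≤ ∑ i ∈ T, (Cfam i).card := Finset.card_biUnion_le
    _ = T.card * 3 := by simp [hsize]
  omega
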